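/- Let w : ℝ → ℝ be a solution of the ODE w''(s) + V(w(s), w'(s)) w(s) = 0, where V(a,b) = ((2p−3)b² + (p−1)a²)/((p−1)b² + a²) for (a,b) ≠ (0,0) and 1 < p < ∞, with initial data (w(0), w'(0)) = (a₀, b₀) ≠ (0,0). Then there exist constants 0 < c < C (depending on a₀, b₀, p) with c < w(s)² + w'(s)² < C for all s in the maximal interval of existence. In particular, the trajectory (w, w') never reaches the origin. -/

import Mathlib

/-- The coefficient `V(a,b)` in Wolff's ODE for `p`-harmonic plane waves. -/
noncomputable def wolffV (p a b : ℝ) : ℝ :=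
  ((2 * p - 3) * b ^ 2 + (p - 1) * a ^ 2) / ((p - 1) * b ^ 2 + a ^ 2)

/-- A priori two-sided bound on `w² + w'²` along solutions of Wolff's ODE
`w'' + V(w, w') w = 0` with nonzero initial data: the trajectory `(w, w')`
stays in a fixed annulus and in particular never reaches the origin. -/
theorem wolff_ode_trajectory_bounds
    (p : ℝ) (hp : 1 < p)
    (w w' w'' : ℝ → ℝ)
    (hw : ∀ s, HasDerivAt w (w' s) s)
    (hw' : ∀ s, HasDerivAt w' (w'' s) s)
    (hode : ∀ s, w'' s + wolffV p (w s) (w' s) * w s = 0)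
    (a₀ b₀ : ℝ) (hinit : w 0 = a₀ ∧ w' 0 = b₀) (hinit0 : (a₀, b₀) ≠ (0, 0)) :
    ∃ c C : ℝ, 0 < c ∧ c < C ∧
      ∀ s, c < w s ^ 2 + w' s ^ 2 ∧ w s ^ 2 + w' s ^ 2 < C := by
  obtain ⟨ha, hb⟩ := hinit
  have hp1 : (0:ℝ) < p - 1 := by linarith
  set f : ℝ → ℝ := fun s => w s ^ 2 + w' s ^ 2 with hf_def
  have hfeq : ∀ t, f t = w t ^ 2 + w' t ^ 2 := fun _ => rfl
  -- initial positivity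
  have hf0 : 0 < f 0 := by
    have h0 : a₀ ≠ 0 ∨ b₀ ≠ 0 := by
      by_contra h; push_neg at h
      exact hinit0 (by simp [h.1, h.2])
    simp only [hf_def, ha, hb]
    rcases h0 with h | h <;> positivity
  -- derivative of f
  have hode' : ∀ s, w'' s = -(wolffV p (w s) (w' s) * w s) := fun s => by
    linarith [hode s]
  have hfd : ∀ s, HasDerivAt f (2 * w s * w' s * (1 - wolffV p (w s) (w' s))) s := by
    intro s
    have h1 := ((hw s).pow 2).add ((hw' s).pow 2)
    convert h1 using 1
    · rfl
    · rfl
    · rfl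
    rw [hode' s]; ring
  -- min constant
  have hm : 0 < min 1 (p - 1) := lt_min one_pos hp1
  have hmf : ∀ a b : ℝ, min 1 (p - 1) * (a ^ 2 + b ^ 2) ≤ (p - 1) * b ^ 2 + a ^ 2 := by
    intro a b
    have h1 : min 1 (p - 1) ≤ 1 := min_le_left _ _
    have h2 : min 1 (p - 1) ≤ p - 1 := min_le_right _ _
    nlinarith [sq_nonneg a, sq_nonneg b]
  set K : ℝ := |2 - p| / min 1 (p - 1) with hK_def
  have hK0 : 0 ≤ K := div_nonneg (abs_nonneg _) hm.le
  -- one minus V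
  have hVform : ∀ a b : ℝ, (p - 1) * b ^ 2 + a ^ 2 ≠ 0 →
      1 - wolffV p a b = (2 - p) * (a ^ 2 + b ^ 2) / ((p - 1) * b ^ 2 + a ^ 2) := by
    intro a b hD
    rw [wolffV, eq_div_iff hD, sub_mul, div_mul_cancel₀ _ hD]
    ring
  -- Gronwall bound on |f'|
  have hbound : ∀ s, |2 * w s * w' s * (1 - wolffV p (w s) (w' s))| ≤ K * f s := by
    intro s
    set a := w s; set b := w' s
    rcases eq_or_lt_of_le (by positivity : (0:ℝ) ≤ f s) with h | hfs
    · have hfs0 : a ^ 2 + b ^ 2 = 0 := h.symm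
      have ha0 : a = 0 := by nlinarith [sq_nonneg a, sq_nonneg b]
      have : f s = 0 := h.symm
      rw [this]
      simp [ha0]
    · have hD : 0 < (p - 1) * b ^ 2 + a ^ 2 :=
        lt_of_lt_of_le (by positivity) (hmf a b)
      have hfseq : f s = a ^ 2 + b ^ 2 := rfl
      rw [hfseq] at hfs ⊢
      rw [hVform a b hD.ne']
      rw [abs_mul (2 * a * b), abs_div, abs_mul (2 - p), abs_of_pos hD, abs_of_pos hfs]
      have h2ab : |2 * a * b| ≤ a ^ 2 + b ^ 2 := by
        rw [abs_le]; constructor <;> nlinarith [sq_nonneg (a + b), sq_nonneg (a - b)]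
      have hfD : (a ^ 2 + b ^ 2) / ((p - 1) * b ^ 2 + a ^ 2) ≤ 1 / min 1 (p - 1) := by
        rw [div_le_div_iff₀ hD hm]
        have := hmf a b
        nlinarith
      calc |2 * a * b| * (|2 - p| * (a ^ 2 + b ^ 2) / ((p - 1) * b ^ 2 + a ^ 2))
          ≤ (a ^ 2 + b ^ 2) * (|2 - p| * (a ^ 2 + b ^ 2) / ((p - 1) * b ^ 2 + a ^ 2)) := by
            apply mul_le_mul_of_nonneg_right h2ab
            positivity
        _ = (a ^ 2 + b ^ 2) * |2 - p| * ((a ^ 2 + b ^ 2) / ((p - 1) * b ^ 2 + a ^ 2)) := by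
            ring
        _ ≤ (a ^ 2 + b ^ 2) * |2 - p| * (1 / min 1 (p - 1)) := by
            apply mul_le_mul_of_nonneg_left hfD
            positivity
        _ = K * (a ^ 2 + b ^ 2) := by rw [hK_def]; ring
  -- positivity of f everywhere
  have hfpos : ∀ s, 0 < f s := by
    intro s
    rcases le_or_gt 0 s with hs | hs
    · have hg : ∀ x, HasDerivAt (fun t => f t * Real.exp (K * t))
          ((2 * w x * w' x * (1 - wolffV p (w x) (w' x)) + K * f x) * Real.exp (K * x)) x := by
        intro x
        have he : HasDerivAt (fun t => Real.exp (K * t)) (Real.exp (K * x) * K) x := by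
          simpa using ((hasDerivAt_id x).const_mul K).exp
        have := (hfd x).mul he
        exact this.congr_deriv (by ring)
      have hmono : Monotone (fun t => f t * Real.exp (K * t)) := by
        apply monotone_of_deriv_nonneg
        · exact fun x => (hg x).differentiableAt
        · intro x
          rw [(hg x).deriv]
          have h1 : -(K * f x) ≤ 2 * w x * w' x * (1 - wolffV p (w x) (w' x)) :=
            neg_le_of_abs_le (hbound x)
          have h2 : 0 ≤ 2 * w x * w' x * (1 - wolffV p (w x) (w' x)) + K * f x := by linarith
          exact mul_nonneg h2 (Real.exp_pos _).le
      have hle := hmono hs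
      simp only at hle
      have hexp : 0 < Real.exp (K * s) := Real.exp_pos _
      nlinarith [Real.exp_pos (K * (0:ℝ)), hf0, hle]
    · have hg : ∀ x, HasDerivAt (fun t => f t * Real.exp (-K * t))
          ((2 * w x * w' x * (1 - wolffV p (w x) (w' x)) - K * f x) * Real.exp (-K * x)) x := by
        intro x
        have he : HasDerivAt (fun t => Real.exp (-K * t)) (Real.exp (-K * x) * (-K)) x := by
          simpa using ((hasDerivAt_id x).const_mul (-K)).exp
        have := (hfd x).mul he
        exact this.congr_deriv (by ring)
      have hanti : Antitone (fun t => f t * Real.exp (-K * t)) := by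
        apply antitone_of_deriv_nonpos
        · exact fun x => (hg x).differentiableAt
        · intro x
          rw [(hg x).deriv]
          have h1 : 2 * w x * w' x * (1 - wolffV p (w x) (w' x)) ≤ K * f x :=
            le_of_abs_le (hbound x)
          have h2 : 2 * w x * w' x * (1 - wolffV p (w x) (w' x)) - K * f x ≤ 0 := by linarith
          exact mul_nonpos_of_nonpos_of_nonneg h2 (Real.exp_pos _).le
      have hle := hanti hs.le
      simp only at hle
      have hexp : 0 < Real.exp (-K * s) := Real.exp_pos _
      nlinarith [Real.exp_pos (-K * (0:ℝ)), hf0, hle]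
  -- conserved quantity
  set H : ℝ → ℝ := fun s => (p - 1) * Real.log (f s) + (p - 2) * (w s ^ 2 / f s) with hH_def
  have hHd : ∀ s, HasDerivAt H 0 s := by
    intro s
    set a := w s with ha_def
    set b := w' s with hb_def
    have hfs := hfpos s
    have hD : 0 < (p - 1) * b ^ 2 + a ^ 2 := lt_of_lt_of_le (by positivity) (hmf a b)
    have hlog : HasDerivAt (fun t => Real.log (f t))
        (2 * a * b * (1 - wolffV p a b) / f s) s := (hfd s).log hfs.ne'
    have hdiv : HasDerivAt (fun t => w t ^ 2 / f t)
        ((2 * a ^ 1 * b * f s - a ^ 2 * (2 * a * b * (1 - wolffV p a b))) / f s ^ 2) s :=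
      ((hw s).pow 2).div (hfd s) hfs.ne'
    have hsum := (hlog.const_mul (p - 1)).add (hdiv.const_mul (p - 2))
    convert hsum using 1
    · rfl
    · rfl
    · rfl
    rw [hVform a b hD.ne']
    have hfseq : f s = a ^ 2 + b ^ 2 := rfl
    rw [hfseq]
    field_simp
    ring
  have hHconst : ∀ s, H s = H 0 := fun s =>
    is_const_of_deriv_eq_zero (fun x => (hHd x).differentiableAt)
      (fun x => (hHd x).deriv) s 0
  have hHs : ∀ s, (p - 1) * Real.log (f s) + (p - 2) * (w s ^ 2 / f s) = H 0 := fun s =>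
    hHconst s
  clear_value f H
  -- bounds on log f
  have hlogb : ∀ s, (H 0 - |p - 2|) / (p - 1) ≤ Real.log (f s) ∧
      Real.log (f s) ≤ (H 0 + |p - 2|) / (p - 1) := by
    intro s
    have hfs := hfpos s
    have hq1 : 0 ≤ w s ^ 2 / f s := by positivity
    have hq2 : w s ^ 2 / f s ≤ 1 := by
      rw [div_le_one hfs]; have := hfeq s; nlinarith [sq_nonneg (w' s)]
    have habs : |(p - 2) * (w s ^ 2 / f s)| ≤ |p - 2| := by
      rw [abs_mul]
      calc |p - 2| * |w s ^ 2 / f s| ≤ |p - 2| * 1 := by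
            apply mul_le_mul_of_nonneg_left _ (abs_nonneg _)
            rw [abs_le]; exact ⟨by linarith, hq2⟩
        _ = |p - 2| := mul_one _
    have h1 : -|p - 2| ≤ (p - 2) * (w s ^ 2 / f s) := neg_le_of_abs_le habs
    have h2 : (p - 2) * (w s ^ 2 / f s) ≤ |p - 2| := le_of_abs_le habs
    have heq : (p - 1) * Real.log (f s) + (p - 2) * (w s ^ 2 / f s) = H 0 := hHs s
    constructor
    · rw [div_le_iff₀ hp1, mul_comm]; linarith
    · rw [le_div_iff₀ hp1, mul_comm]; linarith
  refine ⟨Real.exp ((H 0 - |p - 2|) / (p - 1) - 1),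
          Real.exp ((H 0 + |p - 2|) / (p - 1) + 1), Real.exp_pos _, ?_, ?_⟩
  · apply Real.exp_lt_exp.mpr
    have h0 : (0:ℝ) ≤ |p - 2| := abs_nonneg _
    have h : (H 0 - |p - 2|) / (p - 1) ≤ (H 0 + |p - 2|) / (p - 1) :=
      (div_le_div_iff_of_pos_right hp1).mpr (by linarith)
    linarith
  · intro s
    have hfs := hfpos s
    have hl := hlogb s
    have hfe : f s = Real.exp (Real.log (f s)) := (Real.exp_log hfs).symm
    rw [← hfeq s]
    constructor
    · calc Real.exp ((H 0 - |p - 2|) / (p - 1) - 1)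
          < Real.exp (Real.log (f s)) := Real.exp_lt_exp.mpr (by linarith [hl.1])
        _ = f s := hfe.symm
    · calc (f s : ℝ) = Real.exp (Real.log (f s)) := hfe
        _ < Real.exp ((H 0 + |p - 2|) / (p - 1) + 1) :=
            Real.exp_lt_exp.mpr (by linarith [hl.2])
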